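/- arXiv:2412.04389 — 4 statements merged into one kernel-verified Lean document; each statement's English description precedes it below -/
import Mathlib

section
/- For any hypergraph H, m(H) = m(H^*), where m denotes the maximum cardinality of a C-matching in the incidence graph. -/
open scoped Classical

section Defs

variable {V E : Type*}

/-- The set of vertices eventually burned when `B` is initially burned:
a vertex burns if it is initially burned, or if some hyperedge contains it and
all other vertices of that hyperedge are burned. -/
inductive Burns (edges : E → Finset V) (B : Set V) : V → Prop
  | init (v : V) : v ∈ B → Burns edges B v
  | spread (h : E) (v : V) : v ∈ edges h →
      (∀ u, u ∈ edges h → u ≠ v → Burns edges B u) → Burns edges B v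

/-- `B` is a lazy burning set if every vertex eventually burns. -/
def IsLazyBurningSet (edges : E → Finset V) (B : Set V) : Prop :=
  ∀ v, Burns edges B v

/-- The lazy burning number: minimum size of a lazy burning set. -/
noncomputable def lazyBurningNumber [Fintype V] (edges : E → Finset V) : ℕ :=
  sInf {n | ∃ B : Finset V, B.card = n ∧ IsLazyBurningSet edges ↑B}

/-- A `C`-matching in the incidence graph: a list of incidence pairs `(vᵢ, hᵢ)`
with the `vᵢ` distinct, such that `hᵢ` contains none of the later vertices. -/
def IsCMatching (edges : E → Finset V) (L : List (V × E)) : Prop :=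
  (∀ p ∈ L, p.1 ∈ edges p.2) ∧ (L.map Prod.fst).Nodup ∧
  ∀ i j (hi : i < L.length) (hj : j < L.length), i < j →
    (L.get ⟨j, hj⟩).1 ∉ edges (L.get ⟨i, hi⟩).2

/-- `m(H)`: maximum cardinality (length) of a `C`-matching. -/
noncomputable def maxCMatching (edges : E → Finset V) : ℕ :=
  sSup {k | ∃ L : List (V × E), IsCMatching edges L ∧ L.length = k}

/-- A chronological list of lazy burnings starting from `B0`: a list of pairs
`(hᵢ, vᵢ)` with `vᵢ ∈ hᵢ` and `hᵢ \ {vᵢ} ⊆ B_{i-1} = B0 ∪ {v₁, …, v_{i-1}}`. -/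
def IsChronList (edges : E → Finset V) (B0 : Set V) (L : List (E × V)) : Prop :=
  ∀ i (hi : i < L.length),
    (L.get ⟨i, hi⟩).2 ∈ edges (L.get ⟨i, hi⟩).1 ∧
    ∀ u, u ∈ edges (L.get ⟨i, hi⟩).1 → u ≠ (L.get ⟨i, hi⟩).2 →
      u ∈ B0 ∨ ∃ j, ∃ hj : j < L.length, j < i ∧ u = (L.get ⟨j, hj⟩).2

/-- The dual hypergraph: vertices are the hyperedges of `H`, and for each vertex
`v` of `H` there is a hyperedge `N(v) = {h : v ∈ h}`. -/
noncomputable def dualEdges [Fintype E] (edges : E → Finset V) (v : V) : Finset E :=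
  Finset.univ.filter (fun h => v ∈ edges h)

/-- `U` induces a subhypergraph all of whose hyperedges have cardinality `> 1`. -/
def GoodSet (edges : E → Finset V) (U : Finset V) : Prop :=
  ∀ h : E, ((edges h) ∩ U).Nonempty → 1 < ((edges h) ∩ U).card

/-- The vertex set of the core of `H`: the maximum induced subhypergraph all of
whose hyperedges have cardinality `> 1`. -/
noncomputable def coreSet [Fintype V] (edges : E → Finset V) : Finset V :=
  (Finset.univ : Finset V).powerset.sup (fun U => if GoodSet edges U then U else ∅)

/-- The zero forcing closure: a black vertex `u` with unique white neighbor `v`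
forces `v`. -/
inductive ZFClosure {α : Type*} (G : SimpleGraph α) (B : Set α) : α → Prop
  | init (v : α) : v ∈ B → ZFClosure G B v
  | force (u v : α) : ZFClosure G B u → G.Adj u v →
      (∀ w, G.Adj u w → w ≠ v → ZFClosure G B w) → ZFClosure G B v

def IsZeroForcingSet {α : Type*} (G : SimpleGraph α) (B : Set α) : Prop :=
  ∀ v, ZFClosure G B v

noncomputable def zeroForcingNumber {α : Type*} [Fintype α] (G : SimpleGraph α) : ℕ :=
  sInf {n | ∃ B : Finset α, B.card = n ∧ IsZeroForcingSet G ↑B}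

/-- The skew zero forcing closure: any vertex `u` (black or white) with a unique
white neighbor `v` forces `v`. -/
inductive SkewZFClosure {α : Type*} (G : SimpleGraph α) (B : Set α) : α → Prop
  | init (v : α) : v ∈ B → SkewZFClosure G B v
  | force (u v : α) : G.Adj u v →
      (∀ w, G.Adj u w → w ≠ v → SkewZFClosure G B w) → SkewZFClosure G B v

def IsSkewZeroForcingSet {α : Type*} (G : SimpleGraph α) (B : Set α) : Prop :=
  ∀ v, SkewZFClosure G B v

noncomputable def skewZeroForcingNumber {α : Type*} [Fintype α] (G : SimpleGraph α) : ℕ :=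
  sInf {n | ∃ B : Finset α, B.card = n ∧ IsSkewZeroForcingSet G ↑B}

/-- The incidence (Levi) graph of a hypergraph. -/
def incidenceGraph (edges : E → Finset V) : SimpleGraph (V ⊕ E) where
  Adj x y := (∃ v h, x = Sum.inl v ∧ y = Sum.inr h ∧ v ∈ edges h) ∨
             (∃ v h, x = Sum.inr h ∧ y = Sum.inl v ∧ v ∈ edges h)
  symm := ⟨by
    rintro x y (⟨v, h, rfl, rfl, hm⟩ | ⟨v, h, rfl, rfl, hm⟩)
    · exact Or.inr ⟨v, h, rfl, rfl, hm⟩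
    · exact Or.inl ⟨v, h, rfl, rfl, hm⟩⟩
  loopless := ⟨by
    rintro x (⟨v, h, h1, h2, _⟩ | ⟨v, h, h1, h2, _⟩) <;> subst h1 <;> simp_all⟩

/-- The star `K_{1,j}` with center `0`. -/
def starGraph (j : ℕ) : SimpleGraph (Fin (j + 1)) where
  Adj a b := a ≠ b ∧ (a = 0 ∨ b = 0)
  symm := ⟨fun _ _ ⟨hne, hor⟩ => ⟨hne.symm, hor.symm⟩⟩
  loopless := ⟨fun _ ha => ha.1 rfl⟩

end Defs

section CMatching

variable {V E : Type*}

lemma isCMatching_iff_pairwise (edges : E → Finset V) (L : List (V × E)) :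
    IsCMatching edges L ↔ (∀ p ∈ L, p.1 ∈ edges p.2) ∧ (L.map Prod.fst).Nodup ∧
      L.Pairwise (fun p q => q.1 ∉ edges p.2) := by
  rw [List.pairwise_iff_get]
  refine and_congr_right fun _ => and_congr_right fun _ => ⟨?_, ?_⟩
  · exact fun h i j hij => h i j i.2 j.2 hij
  · exact fun h i j hi hj hij => h ⟨i, hi⟩ ⟨j, hj⟩ hij

/-- The hyperedges of a C-matching are distinct: `vⱼ ∈ hⱼ` but `vⱼ ∉ hᵢ` for `i < j`. -/
lemma IsCMatching.nodup_snd {edges : E → Finset V} {L : List (V × E)}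
    (hL : IsCMatching edges L) : (L.map Prod.snd).Nodup := by
  obtain ⟨hinc, -, horder⟩ := (isCMatching_iff_pairwise edges L).mp hL
  refine List.pairwise_map.mpr (horder.imp_of_mem fun {p q} _ hq hqp hpq => hqp ?_)
  exact hpq ▸ hinc q hq

/-- The order condition `vⱼ ∉ hᵢ` for `i < j` is `hᵢ ∉ N(vⱼ)` in the transposed hypergraph,
so it holds for the swapped pairs once the list is reversed. -/
lemma IsCMatching.swap_reverse {edges : E → Finset V} {edges' : V → Finset E}
    (hrel : ∀ v h, h ∈ edges' v ↔ v ∈ edges h) {L : List (V × E)}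
    (hL : IsCMatching edges L) : IsCMatching edges' (L.map Prod.swap).reverse := by
  have hsnd := hL.nodup_snd
  obtain ⟨hinc, -, horder⟩ := (isCMatching_iff_pairwise edges L).mp hL
  refine (isCMatching_iff_pairwise edges' _).mpr ⟨?_, ?_, ?_⟩
  · intro p hp
    obtain ⟨q, hq, rfl⟩ := List.mem_map.mp (List.mem_reverse.mp hp)
    exact (hrel _ _).mpr (hinc q hq)
  · rw [List.map_reverse, List.map_map, List.nodup_reverse]
    exact hsnd
  · simpa [List.pairwise_reverse, List.pairwise_map, hrel] using horder

lemma maxCMatching_eq_of_transpose {edges : E → Finset V} {edges' : V → Finset E}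
    (hrel : ∀ v h, h ∈ edges' v ↔ v ∈ edges h) :
    maxCMatching edges = maxCMatching edges' := by
  have hrel' : ∀ h v, v ∈ edges h ↔ h ∈ edges' v := fun v h => (hrel h v).symm
  unfold maxCMatching
  congr 1
  ext k
  constructor
  · rintro ⟨L, hL, rfl⟩
    exact ⟨_, hL.swap_reverse hrel, by simp⟩
  · rintro ⟨L, hL, rfl⟩
    exact ⟨_, hL.swap_reverse hrel', by simp⟩

end CMatching

theorem stmt4 {V E : Type*} [Fintype E] (edges : E → Finset V) :
    maxCMatching edges = maxCMatching (dualEdges edges) :=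
  (maxCMatching_eq_of_transpose fun v h => by simp [dualEdges]).symm
end

section
/- Let H be a hypergraph, h \in E(H), B \subseteq V(H) with h \subseteq B, and u \in h. Then B is a lazy burning set for H if and only if B \setminus \{u\} is a lazy burning set for H. -/
open scoped Classical

namespace Burns

variable {V E : Type*} {edges : E → Finset V} {B C : Set V}

theorem trans (hBC : ∀ b ∈ B, Burns edges C b) {v : V} (hv : Burns edges B v) :
    Burns edges C v := by
  induction hv with
  | init v hv => exact hBC v hv
  | spread e v hve _ ih => exact spread e v hve ih

theorem mono (hBC : B ⊆ C) {v : V} (hv : Burns edges B v) : Burns edges C v :=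
  hv.trans fun b hb => init b (hBC hb)

theorem of_mem_of_sdiff_subset {e : E} {v : V} (hv : v ∈ edges e)
    (he : ↑(edges e) \ {v} ⊆ B) : Burns edges B v :=
  spread e v hv fun w hw hwv => init w (he ⟨hw, hwv⟩)

end Burns

namespace IsLazyBurningSet

variable {V E : Type*} {edges : E → Finset V} {B C : Set V}

theorem of_forall_burns (hB : IsLazyBurningSet edges B)
    (hBC : ∀ b ∈ B, Burns edges C b) : IsLazyBurningSet edges C :=
  fun v => (hB v).trans hBC

theorem mono (hB : IsLazyBurningSet edges B) (hBC : B ⊆ C) : IsLazyBurningSet edges C :=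
  fun v => (hB v).mono hBC

end IsLazyBurningSet

theorem stmt13 {V E : Type*} (edges : E → Finset V) (h : E) (B : Set V)
    (hB : ↑(edges h) ⊆ B) (u : V) (hu : u ∈ edges h) :
    IsLazyBurningSet edges B ↔ IsLazyBurningSet edges (B \ {u}) := by
  refine ⟨fun hL => hL.of_forall_burns fun b hb => ?_, fun hL => hL.mono Set.sdiff_subset⟩
  by_cases hbu : b = u
  · subst hbu
    exact Burns.of_mem_of_sdiff_subset hu (Set.sdiff_subset_sdiff_left hB)
  · exact Burns.init b ⟨hb, hbu⟩
end

section
/- For any hypergraph H and B \subseteq V(core(H)), B is a lazy burning set for core(H) if and only if B is a lazy burning set for H. Consequently b_L(H) = b_L(core(H)). -/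
open scoped Classical

/-!
A hyperedge containing exactly one unburned vertex burns it, so the vertices that never burn
induce a subhypergraph without singleton hyperedges and hence lie in the core. Thus
everything outside the core burns from any starting set, and a burning inside the core lifts to
`H`. Conversely, restricting a burning of `H` to the core is still a burning, of the restricted
starting set, because each hyperedge only shrinks to its trace on the core.
-/

namespace Burns

variable {V E : Type*} {edges : E → Finset V} {B : Set V}

theorem inter_of_mem (U : Finset V) {v : V} (hv : Burns edges B v) (hvU : v ∈ U) :
    Burns (fun h => edges h ∩ U) (B ∩ ↑U) v := by
  induction hv with
  | init v hvB => exact init v ⟨hvB, hvU⟩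
  | spread h v hvh _ ih =>
    refine spread h v (Finset.mem_inter.2 ⟨hvh, hvU⟩) fun u hu hne => ?_
    exact ih u (Finset.mem_inter.1 hu).1 hne (Finset.mem_inter.1 hu).2

theorem of_inter {U : Finset V} (hout : ∀ v ∉ U, Burns edges B v) {v : V}
    (hv : Burns (fun h => edges h ∩ U) B v) : Burns edges B v := by
  induction hv with
  | init v hvB => exact init v hvB
  | spread h v hvh _ ih =>
    refine spread h v (Finset.mem_inter.1 hvh).1 fun u hu hne => ?_
    by_cases huU : u ∈ U
    · exact ih u (Finset.mem_inter.2 ⟨hu, huU⟩) hne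
    · exact hout u huU

end Burns

section Core

variable {V E : Type*} [Fintype V] {edges : E → Finset V}

theorem subset_coreSet_of_goodSet {U : Finset V} (hU : GoodSet edges U) :
    U ⊆ coreSet edges := by
  have h := Finset.le_sup (f := fun U => if GoodSet edges U then U else ∅)
    (Finset.mem_powerset.2 (Finset.subset_univ U))
  simp only [if_pos hU] at h
  exact h

theorem goodSet_filter_not_burns (B : Set V) :
    GoodSet edges (Finset.univ.filter fun v => ¬ Burns edges B v) := by
  intro h hne
  by_contra! hle
  obtain ⟨w, hw⟩ := Finset.card_eq_one.1 (le_antisymm hle hne.card_pos)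
  have hunique : ∀ u, u ∈ edges h → ¬ Burns edges B u → u = w := fun u hu hu' => by
    simpa [← Finset.mem_singleton, ← hw] using And.intro hu hu'
  have hwh : w ∈ edges h ∧ ¬ Burns edges B w := by
    simpa using hw.ge (Finset.mem_singleton_self w)
  exact hwh.2 (Burns.spread h w hwh.1 fun u hu huw =>
    by_contra fun hu' => huw (hunique u hu hu'))

theorem burns_of_notMem_coreSet (B : Set V) {v : V} (hv : v ∉ coreSet edges) :
    Burns edges B v := by
  by_contra hvB
  exact hv (subset_coreSet_of_goodSet (goodSet_filter_not_burns B)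
    (Finset.mem_filter.2 ⟨Finset.mem_univ v, hvB⟩))

theorem isLazyBurningSet_iff_burns_coreSet {B : Set V} (hB : B ⊆ ↑(coreSet edges)) :
    (∀ v ∈ coreSet edges, Burns (fun h => edges h ∩ coreSet edges) B v) ↔
      IsLazyBurningSet edges B := by
  refine ⟨fun hcore v => ?_, fun hlazy v hv => ?_⟩
  · by_cases hv : v ∈ coreSet edges
    · exact (hcore v hv).of_inter fun u hu => burns_of_notMem_coreSet B hu
    · exact burns_of_notMem_coreSet B hv
  · simpa only [Set.inter_eq_left.2 hB] using (hlazy v).inter_of_mem _ hv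

theorem IsLazyBurningSet.burns_coreSet_inter {B : Finset V} (hB : IsLazyBurningSet edges ↑B) :
    ∀ v ∈ coreSet edges,
      Burns (fun h => edges h ∩ coreSet edges) ↑(B ∩ coreSet edges) v := fun v hv => by
  simpa only [Finset.coe_inter] using (hB v).inter_of_mem _ hv

end Core

theorem stmt15 {V E : Type*} [Fintype V] (edges : E → Finset V) (B : Finset V)
    (hB : B ⊆ coreSet edges) :
    ((∀ v ∈ coreSet edges, Burns (fun h => edges h ∩ coreSet edges) ↑B v) ↔
        IsLazyBurningSet edges ↑B) ∧
    lazyBurningNumber edges =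
      sInf {n | ∃ B' : Finset V, B' ⊆ coreSet edges ∧ B'.card = n ∧
        ∀ v ∈ coreSet edges, Burns (fun h => edges h ∩ coreSet edges) ↑B' v} := by
  refine ⟨isLazyBurningSet_iff_burns_coreSet (Finset.coe_subset.2 hB), ?_⟩
  refine csInf_eq_csInf_of_forall_exists_le ?_ ?_
  · rintro _ ⟨B₀, rfl, hB₀⟩
    exact ⟨_, ⟨B₀ ∩ coreSet edges, Finset.inter_subset_right, rfl,
      hB₀.burns_coreSet_inter⟩, Finset.card_le_card Finset.inter_subset_left⟩
  · rintro _ ⟨B', hB', rfl, hburn⟩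
    exact ⟨_, ⟨B', rfl, (isLazyBurningSet_iff_burns_coreSet
      (Finset.coe_subset.2 hB')).1 hburn⟩, le_rfl⟩
end

section
/- The lazy burning number is monotone under vertex removal: for any hypergraph H and vertex v \in V(H), b_L(H) - 1 \le b_L(H \setminus \{v\}) \le b_L(H). -/
open scoped Classical

/-! Every burning process in `H` restricts to one in `H \ {v}` (delete `v` from each hyperedge
and from the initial set), so `b_L(H \ {v}) ≤ b_L(H)`. Conversely, a lazy burning set of
`H \ {v}` together with `v` burns `H`, since each burning step of `H \ {v}` becomes a step of `H`
once `v` is burned; hence `b_L(H) ≤ b_L(H \ {v}) + 1`. -/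

section VertexDeletion

variable {V E : Type*} {edges : E → Finset V} {B : Set V} {u : V}

namespace Burns

theorem erase_vertex (v : V) (hu : Burns edges B u) (huv : u ≠ v) :
    Burns (fun h => (edges h).erase v) (B \ {v}) u := by
  induction hu with
  | init w hw => exact init w ⟨hw, huv⟩
  | spread h w hw _ ih =>
    refine spread h w (Finset.mem_erase.mpr ⟨huv, hw⟩) fun x hx hxw => ?_
    obtain ⟨hxv, hx⟩ := Finset.mem_erase.mp hx
    exact ih x hx hxw hxv

theorem insert_of_erase_vertex (v : V) (hu : Burns (fun h => (edges h).erase v) B u) :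
    Burns edges (insert v B) u := by
  induction hu with
  | init w hw => exact init w (Set.mem_insert_of_mem v hw)
  | spread h w hw _ ih =>
    refine spread h w (Finset.mem_of_mem_erase hw) fun x hx hxw => ?_
    by_cases hxv : x = v
    · exact init x (hxv ▸ Set.mem_insert x B)
    · exact ih x (Finset.mem_erase.mpr ⟨hxv, hx⟩) hxw

end Burns

theorem isLazyBurningSet_insert_of_burns_erase_vertex {v : V}
    (hB : ∀ u, u ≠ v → Burns (fun h => (edges h).erase v) B u) :
    IsLazyBurningSet edges (insert v B) := fun u => by
  by_cases hu : u = v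
  · exact Burns.init u (hu ▸ Set.mem_insert u B)
  · exact (hB u hu).insert_of_erase_vertex v

end VertexDeletion

section LazyBurningNumber

variable {V E : Type*} [Fintype V] {edges : E → Finset V}

theorem lazyBurningNumber_le_card {B : Finset V} (hB : IsLazyBurningSet edges ↑B) :
    lazyBurningNumber edges ≤ B.card :=
  Nat.sInf_le ⟨B, rfl, hB⟩

theorem exists_isLazyBurningSet_card_eq_lazyBurningNumber (edges : E → Finset V) :
    ∃ B : Finset V, B.card = lazyBurningNumber edges ∧ IsLazyBurningSet edges ↑B :=
  Nat.sInf_mem (s := {n | ∃ B : Finset V, B.card = n ∧ IsLazyBurningSet edges ↑B})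
    ⟨_, Finset.univ, rfl, fun u => Burns.init u (Finset.mem_coe.mpr (Finset.mem_univ u))⟩

end LazyBurningNumber

theorem stmt16 {V E : Type*} [Fintype V] (edges : E → Finset V) (v : V) :
    lazyBurningNumber edges - 1 ≤
        sInf {n | ∃ B : Finset V, v ∉ B ∧ B.card = n ∧
          ∀ u, u ≠ v → Burns (fun h => (edges h).erase v) ↑B u} ∧
    sInf {n | ∃ B : Finset V, v ∉ B ∧ B.card = n ∧
          ∀ u, u ≠ v → Burns (fun h => (edges h).erase v) ↑B u} ≤
        lazyBurningNumber edges := by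
  set S := {n | ∃ B : Finset V, v ∉ B ∧ B.card = n ∧
    ∀ u, u ≠ v → Burns (fun h => (edges h).erase v) ↑B u}
  constructor
  · obtain ⟨B', hvB', hcard, hB'⟩ : sInf S ∈ S :=
      Nat.sInf_mem ⟨_, Finset.univ.erase v, Finset.notMem_erase v _, rfl,
        fun u hu => Burns.init u (by simp [hu])⟩
    have hburn : IsLazyBurningSet edges ↑(insert v B') :=
      Finset.coe_insert v B' ▸ isLazyBurningSet_insert_of_burns_erase_vertex hB'
    have := lazyBurningNumber_le_card hburn
    rw [Finset.card_insert_of_notMem hvB', hcard] at this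
    omega
  · obtain ⟨B, hcard, hB⟩ := exists_isLazyBurningSet_card_eq_lazyBurningNumber edges
    have hmem : (B.erase v).card ∈ S := ⟨B.erase v, Finset.notMem_erase v B, rfl,
      fun u hu => Finset.coe_erase v B ▸ (hB u).erase_vertex v hu⟩
    exact hcard ▸ (Nat.sInf_le hmem).trans Finset.card_erase_le
end
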